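/- (Window formula for the consensus error, derived in the proof of Lemma 3.2.) Let α ∈ ℝ, τ ≥ 1, n ≥ 1, d ≥ 1, and for each i ∈ ℕ let W^{(i)} ∈ ℝ^{n×n} satisfy W^{(i)}·1 = 1 and (W^{(i)})ᵀ·1 = 1, with W^{(i)} = J := (1/n)·1·1ᵀ whenever τ divides i+1. Let G^{(j)} ∈ ℝ^{n×d} (rows indexed by agents, with G^{(−1)} := 0) and let X^{(k)}, g^{(k)} ∈ ℝ^{n×d} satisfy X^{(k+1)} = W^{(k)}(X^{(k)} − α·g^{(k)}), g^{(k+1)} = W^{(k)} g^{(k)} + G^{(k+1)} − G^{(k)}, g^{(0)} = G^{(0)}. Write Ŵ^{(i)} := W^{(i)} − J and X̂^{(k)} := (I − J)·X^{(k)}. Then for every k with k − 1 ≥ τ: X̂^{(k)} = −α·Σ_{j=k−τ}^{k−1} (k−j)·(Ŵ^{(k−1)}·Ŵ^{(k−2)}·⋯·Ŵ^{(j)})·(G^{(j)} − G^{(j−1)}). -/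

import Mathlib

open Matrix

noncomputable section

/-- The averaging matrix `J = (1/n) 1 1ᵀ`, with all entries equal to `1/n`. -/
def avgMat (n : ℕ) : Matrix (Fin n) (Fin n) ℝ := Matrix.of fun _ _ => (n : ℝ)⁻¹

/-- The ordered matrix product `M^{(a)} M^{(a-1)} ⋯ M^{(b)}` (larger indices on the left);
for `a < b` it is the empty product `1`. -/
def prodDesc {n : ℕ} (M : ℕ → Matrix (Fin n) (Fin n) ℝ) (a b : ℕ) :
    Matrix (Fin n) (Fin n) ℝ :=
  ((List.range (a + 1 - b)).map (fun t => M (a - t))).prod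

/-!
Since every `W^{(i)}` is doubly stochastic, `(I - J) W^{(i)} = Ŵ^{(i)} = Ŵ^{(i)} (I - J)`, so the
projected iterates `(I - J) X^{(k)}` and `(I - J) g^{(k)}` obey linear recursions driven by the
`Ŵ^{(i)}`, and variation of constants unrolls both into sums of products `Ŵ^{(k-1)} ⋯ Ŵ^{(j)}`.
Substituting the expansion of the tracking variable into that of the iterate, the increment
`G^{(j)} - G^{(j-1)}` is collected once for every `t ∈ [j, k)`, whence the weight `k - j`.
A product of `τ` consecutive factors contains some `Ŵ^{(i)} = 0` with `τ ∣ i + 1`, so only the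
last window `j ≥ k - τ` survives, and the initial term vanishes.
-/

open Finset

/-- `Φ(k, j) = A (k-1) * ⋯ * A j`, and `1` if `k ≤ j`. It is indexed by the exclusive upper end
so that, unlike `prodDesc A (k - 1) j`, it has no junk value at `k = 0`. -/
def stateTransition {M : Type*} [Monoid M] (A : ℕ → M) (k j : ℕ) : M :=
  ((List.range (k - j)).map fun t => A (k - 1 - t)).prod

section StateTransition

variable {M : Type*} [Monoid M] (A : ℕ → M)

@[simp]
lemma stateTransition_self (k : ℕ) : stateTransition A k k = 1 := by
  simp [stateTransition]

lemma stateTransition_mul {j t k : ℕ} (hjt : j ≤ t) (htk : t ≤ k) :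
    stateTransition A k t * stateTransition A t j = stateTransition A k j := by
  rw [stateTransition, stateTransition, stateTransition, show k - j = (k - t) + (t - j) by omega,
    List.range_add, List.map_append, List.prod_append, List.map_map]
  congr 2
  refine List.map_congr_left fun s hs => congrArg A ?_
  rw [List.mem_range] at hs
  dsimp only [Function.comp_apply]
  omega

lemma stateTransition_succ_self (j : ℕ) : stateTransition A (j + 1) j = A j := by
  simp [stateTransition, List.range_succ]

lemma stateTransition_succ_left {j k : ℕ} (h : j ≤ k) :
    stateTransition A (k + 1) j = A k * stateTransition A k j := by
  rw [← stateTransition_succ_self A k, stateTransition_mul A h k.le_succ]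

lemma stateTransition_succ_right {j k : ℕ} (h : j < k) :
    stateTransition A k j = stateTransition A k (j + 1) * A j := by
  rw [← stateTransition_succ_self A j, stateTransition_mul A j.le_succ h]

lemma prodDesc_eq_stateTransition {n : ℕ} (A : ℕ → Matrix (Fin n) (Fin n) ℝ) (a b : ℕ) :
    prodDesc A a b = stateTransition A (a + 1) b := by
  simp [prodDesc, stateTransition]

end StateTransition

lemma stateTransition_eq_zero {M₀ : Type*} [MonoidWithZero M₀] {A : ℕ → M₀} {j i k : ℕ}
    (hji : j ≤ i) (hik : i < k) (hA : A i = 0) : stateTransition A k j = 0 :=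
  List.prod_eq_zero <| List.mem_map.2
    ⟨k - 1 - i, List.mem_range.2 (by omega), by rw [show k - 1 - (k - 1 - i) = i by omega, hA]⟩

lemma stateTransition_eq_zero_of_dvd {M₀ : Type*} [MonoidWithZero M₀] {A : ℕ → M₀} {τ j k : ℕ}
    (hτ : 1 ≤ τ) (hA : ∀ i, τ ∣ i + 1 → A i = 0) (hjk : j + τ ≤ k) :
    stateTransition A k j = 0 := by
  have hmod : j % τ < τ := Nat.mod_lt _ hτ
  have hdiv : τ * (j / τ) + j % τ = j := Nat.div_add_mod j τ
  refine stateTransition_eq_zero (i := j + (τ - 1 - j % τ)) (by omega) (by omega) (hA _ ?_)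
  exact ⟨j / τ + 1, by rw [Nat.mul_succ]; omega⟩

/-- Discrete variation of constants. -/
lemma eq_stateTransition_mul_add_sum {m p R : Type*} [Fintype m] [DecidableEq m] [Semiring R]
    (A : ℕ → Matrix m m R) (y c : ℕ → Matrix m p R) (hy : ∀ t, y (t + 1) = A t * y t + c t)
    (k : ℕ) :
    y k = stateTransition A k 0 * y 0 + ∑ t ∈ range k, stateTransition A k (t + 1) * c t := by
  induction k with
  | zero => simp
  | succ k ih =>
    rw [hy, ih, Matrix.mul_add, Matrix.mul_sum, ← Matrix.mul_assoc,
      ← stateTransition_succ_left A k.zero_le, sum_range_succ, stateTransition_self,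
      Matrix.one_mul, add_assoc]
    congr 2
    refine sum_congr rfl fun t ht => ?_
    rw [← Matrix.mul_assoc, ← stateTransition_succ_left A (mem_range.1 ht)]

lemma sum_range_sum_range_succ {M : Type*} [AddCommMonoid M] (f : ℕ → M) (k : ℕ) :
    ∑ t ∈ range k, ∑ j ∈ range (t + 1), f j = ∑ j ∈ range k, (k - j) • f j := by
  have := sum_Ico_Ico_comm 0 k fun j _ => f j
  simp only [sum_const, Nat.card_Ico, ← range_eq_Ico] at this
  exact this.symm

lemma sum_range_eq_sum_Ico_of_eq_zero {M : Type*} [AddCommMonoid M] {f : ℕ → M} {τ k : ℕ}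
    (hf : ∀ j, j + τ ≤ k → f j = 0) : ∑ j ∈ range k, f j = ∑ j ∈ Ico (k - τ) k, f j := by
  rw [← sum_range_add_sum_Ico f (k.sub_le τ),
    sum_eq_zero fun j hj => hf j (by rw [mem_range] at hj; omega), zero_add]

section Averaging

variable {n : ℕ} {W : Matrix (Fin n) (Fin n) ℝ}

lemma mul_avgMat (hrow : W *ᵥ (fun _ => (1 : ℝ)) = fun _ => 1) : W * avgMat n = avgMat n := by
  ext a b
  have h := congrFun hrow a
  simp only [mulVec, dotProduct, mul_one] at h
  simp only [mul_apply, avgMat, of_apply, ← sum_mul, h, one_mul]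

lemma avgMat_mul (hcol : (fun _ => (1 : ℝ)) ᵥ* W = fun _ => 1) : avgMat n * W = avgMat n := by
  ext a b
  have h := congrFun hcol b
  simp only [vecMul, dotProduct, one_mul] at h
  simp only [mul_apply, avgMat, of_apply, ← mul_sum, h, mul_one]

lemma avgMat_mul_avgMat : avgMat n * avgMat n = avgMat n := by
  rcases Nat.eq_zero_or_pos n with rfl | hn
  · exact Subsingleton.elim _ _
  ext a b
  have : (n : ℝ) ≠ 0 := Nat.cast_ne_zero.2 hn.ne'
  simp only [avgMat, mul_apply, of_apply, sum_const, card_univ, Fintype.card_fin, nsmul_eq_mul]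
  field_simp

lemma one_sub_avgMat_mul (hcol : (fun _ => (1 : ℝ)) ᵥ* W = fun _ => 1) :
    (1 - avgMat n) * W = W - avgMat n := by
  rw [sub_mul, one_mul, avgMat_mul hcol]

lemma sub_avgMat_mul_one_sub_avgMat (hrow : W *ᵥ (fun _ => (1 : ℝ)) = fun _ => 1) :
    (W - avgMat n) * (1 - avgMat n) = W - avgMat n := by
  rw [mul_sub, mul_one, sub_mul, mul_avgMat hrow, avgMat_mul_avgMat, sub_self, sub_zero]

end Averaging

section Recursion

variable {n d : ℕ} {W : ℕ → Matrix (Fin n) (Fin n) ℝ}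

lemma stateTransition_sub_avgMat_mul_one_sub_avgMat
    (hrow : ∀ i, W i *ᵥ (fun _ => (1 : ℝ)) = fun _ => 1) {j k : ℕ} (h : j < k) :
    stateTransition (fun i => W i - avgMat n) k j * (1 - avgMat n)
      = stateTransition (fun i => W i - avgMat n) k j := by
  rw [stateTransition_succ_right _ h, Matrix.mul_assoc, sub_avgMat_mul_one_sub_avgMat (hrow j)]

lemma one_sub_avgMat_mul_eq_sum_of_tracking
    (hrow : ∀ i, W i *ᵥ (fun _ => (1 : ℝ)) = fun _ => 1)
    (hcol : ∀ i, (fun _ => (1 : ℝ)) ᵥ* W i = fun _ => 1)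
    {g b : ℕ → Matrix (Fin n) (Fin d) ℝ} (hg : ∀ k, g (k + 1) = W k * g k + b (k + 1))
    (hg0 : g 0 = b 0) (t : ℕ) :
    (1 - avgMat n) * g t = ∑ j ∈ range (t + 1),
      stateTransition (fun i => W i - avgMat n) t j * ((1 - avgMat n) * b j) := by
  have hstep : ∀ t, (1 - avgMat n) * g (t + 1)
      = (W t - avgMat n) * ((1 - avgMat n) * g t) + (1 - avgMat n) * b (t + 1) := fun t => by
    rw [hg, Matrix.mul_add, ← Matrix.mul_assoc, ← Matrix.mul_assoc, one_sub_avgMat_mul (hcol t),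
      sub_avgMat_mul_one_sub_avgMat (hrow t)]
  refine (eq_stateTransition_mul_add_sum _ (fun t => (1 - avgMat n) * g t) _ hstep t).trans ?_
  rw [sum_range_succ', hg0, add_comm]

lemma stateTransition_mul_eq_sum_of_tracking
    (hrow : ∀ i, W i *ᵥ (fun _ => (1 : ℝ)) = fun _ => 1)
    (hcol : ∀ i, (fun _ => (1 : ℝ)) ᵥ* W i = fun _ => 1)
    {g b : ℕ → Matrix (Fin n) (Fin d) ℝ} (hg : ∀ k, g (k + 1) = W k * g k + b (k + 1))
    (hg0 : g 0 = b 0) {t k : ℕ} (htk : t < k) :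
    stateTransition (fun i => W i - avgMat n) k t * g t
      = ∑ j ∈ range (t + 1), stateTransition (fun i => W i - avgMat n) k j * b j := by
  rw [← stateTransition_sub_avgMat_mul_one_sub_avgMat hrow htk, Matrix.mul_assoc,
    one_sub_avgMat_mul_eq_sum_of_tracking hrow hcol hg hg0, Matrix.mul_sum]
  refine sum_congr rfl fun j hj => ?_
  have hjt : j ≤ t := Nat.lt_succ_iff.1 (mem_range.1 hj)
  rw [← Matrix.mul_assoc, ← Matrix.mul_assoc, stateTransition_mul _ hjt htk.le,
    stateTransition_sub_avgMat_mul_one_sub_avgMat hrow (hjt.trans_lt htk)]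

lemma one_sub_avgMat_mul_iterate_eq
    (hrow : ∀ i, W i *ᵥ (fun _ => (1 : ℝ)) = fun _ => 1)
    (hcol : ∀ i, (fun _ => (1 : ℝ)) ᵥ* W i = fun _ => 1)
    {α : ℝ} {X g : ℕ → Matrix (Fin n) (Fin d) ℝ} (hX : ∀ k, X (k + 1) = W k * (X k - α • g k))
    (k : ℕ) :
    (1 - avgMat n) * X k
      = stateTransition (fun i => W i - avgMat n) k 0 * ((1 - avgMat n) * X 0)
        - α • ∑ t ∈ range k, stateTransition (fun i => W i - avgMat n) k t * g t := by
  have hstep : ∀ t, (1 - avgMat n) * X (t + 1)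
      = (W t - avgMat n) * ((1 - avgMat n) * X t) + -(α • ((W t - avgMat n) * g t)) := fun t => by
    rw [hX, ← Matrix.mul_assoc, one_sub_avgMat_mul (hcol t), ← Matrix.mul_assoc,
      sub_avgMat_mul_one_sub_avgMat (hrow t), Matrix.mul_sub, Matrix.mul_smul, sub_eq_add_neg]
  refine (eq_stateTransition_mul_add_sum _ (fun t => (1 - avgMat n) * X t) _ hstep k).trans ?_
  rw [sub_eq_add_neg (stateTransition _ k 0 * _), smul_sum, ← sum_neg_distrib]
  congr 1
  refine sum_congr rfl fun t ht => ?_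
  rw [Matrix.mul_neg, Matrix.mul_smul, ← Matrix.mul_assoc,
    ← stateTransition_succ_right _ (mem_range.1 ht)]

lemma one_sub_avgMat_mul_iterate_eq_sum_smul
    (hrow : ∀ i, W i *ᵥ (fun _ => (1 : ℝ)) = fun _ => 1)
    (hcol : ∀ i, (fun _ => (1 : ℝ)) ᵥ* W i = fun _ => 1)
    {α : ℝ} {X g b : ℕ → Matrix (Fin n) (Fin d) ℝ} (hX : ∀ k, X (k + 1) = W k * (X k - α • g k))
    (hg : ∀ k, g (k + 1) = W k * g k + b (k + 1)) (hg0 : g 0 = b 0) (k : ℕ) :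
    (1 - avgMat n) * X k
      = stateTransition (fun i => W i - avgMat n) k 0 * ((1 - avgMat n) * X 0)
        - α • ∑ j ∈ range k, (k - j) • (stateTransition (fun i => W i - avgMat n) k j * b j) := by
  rw [one_sub_avgMat_mul_iterate_eq hrow hcol hX, ← sum_range_sum_range_succ,
    sum_congr rfl fun t ht => stateTransition_mul_eq_sum_of_tracking hrow hcol hg hg0
      (mem_range.1 ht)]

end Recursion

theorem consensus_error_window_formula_general (n d τ : ℕ) (hτ : 1 ≤ τ)
    (α : ℝ) (W : ℕ → Matrix (Fin n) (Fin n) ℝ)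
    (hrow : ∀ i, W i *ᵥ (fun _ => (1 : ℝ)) = fun _ => 1)
    (hcol : ∀ i, (fun _ => (1 : ℝ)) ᵥ* W i = fun _ => 1)
    (hJ : ∀ i, τ ∣ (i + 1) → W i = avgMat n)
    (G : ℤ → Matrix (Fin n) (Fin d) ℝ) (hGm1 : G (-1) = 0)
    (X g : ℕ → Matrix (Fin n) (Fin d) ℝ)
    (hX : ∀ k, X (k + 1) = W k * (X k - α • g k))
    (hg : ∀ k, g (k + 1) = W k * g k + G ((k : ℤ) + 1) - G (k : ℤ))
    (hg0 : g 0 = G 0) :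
    ∀ k : ℕ, τ ≤ k - 1 →
      (1 - avgMat n) * X k
        = -(α • ∑ j ∈ Finset.Icc (k - τ) (k - 1),
            ((k : ℝ) - (j : ℝ)) •
              (prodDesc (fun i => W i - avgMat n) (k - 1) j * (G (j : ℤ) - G ((j : ℤ) - 1)))) := by
  intro k hk
  set b : ℕ → Matrix (Fin n) (Fin d) ℝ := fun j => G j - G (j - 1)
  have hb : ∀ k, g (k + 1) = W k * g k + b (k + 1) := fun k => by
    rw [hg, add_sub_assoc]
    simp [b]
  have hb0 : g 0 = b 0 := by simp [b, hg0, hGm1]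
  have hwindow : ∀ j, j + τ ≤ k → stateTransition (fun i => W i - avgMat n) k j = 0 :=
    fun j hj => stateTransition_eq_zero_of_dvd hτ (fun i hi => by rw [hJ i hi, sub_self]) hj
  have hIcc : Icc (k - τ) (k - 1) = Ico (k - τ) k :=
    Icc_sub_one_right_eq_Ico_of_not_isMin (by simp only [isMin_iff_eq_bot, Nat.bot_eq_zero]; omega) _
  rw [one_sub_avgMat_mul_iterate_eq_sum_smul hrow hcol hX hb hb0 k, hwindow 0 (by omega),
    Matrix.zero_mul, zero_sub, hIcc, sum_range_eq_sum_Ico_of_eq_zero (τ := τ) fun j hj => by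
      rw [hwindow j hj, Matrix.zero_mul, smul_zero]]
  refine congrArg (fun S => -(α • S)) (sum_congr rfl fun j hj => ?_)
  rw [prodDesc_eq_stateTransition, Nat.sub_add_cancel (by omega : 1 ≤ k),
    ← Nat.cast_smul_eq_nsmul ℝ, Nat.cast_sub (mem_Ico.1 hj).2.le]

/-- **Window formula for the consensus error (from the proof of Lemma 3.2).**
Under the GT-PGA recursion with doubly stochastic mixing matrices `W^{(i)}` satisfying
`W^{(i)} = J` whenever `τ ∣ i + 1`, writing `Ŵ^{(i)} = W^{(i)} - J` and
`X̂^{(k)} = (I - J) X^{(k)}`, for every `k` with `k - 1 ≥ τ`: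
`X̂^{(k)} = -α ∑_{j=k-τ}^{k-1} (k-j) (Ŵ^{(k-1)} ⋯ Ŵ^{(j)}) (G^{(j)} - G^{(j-1)})`. -/
theorem consensus_error_window_formula (n d τ : ℕ) (hn : 1 ≤ n) (hd : 1 ≤ d) (hτ : 1 ≤ τ)
    (α : ℝ) (W : ℕ → Matrix (Fin n) (Fin n) ℝ)
    (hrow : ∀ i, W i *ᵥ (fun _ => (1 : ℝ)) = fun _ => 1)
    (hcol : ∀ i, (fun _ => (1 : ℝ)) ᵥ* W i = fun _ => 1)
    (hJ : ∀ i, τ ∣ (i + 1) → W i = avgMat n)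
    (G : ℤ → Matrix (Fin n) (Fin d) ℝ) (hGm1 : G (-1) = 0)
    (X g : ℕ → Matrix (Fin n) (Fin d) ℝ)
    (hX : ∀ k, X (k + 1) = W k * (X k - α • g k))
    (hg : ∀ k, g (k + 1) = W k * g k + G ((k : ℤ) + 1) - G (k : ℤ))
    (hg0 : g 0 = G 0) :
    ∀ k : ℕ, τ ≤ k - 1 →
      (1 - avgMat n) * X k
        = -(α • ∑ j ∈ Finset.Icc (k - τ) (k - 1),
            ((k : ℝ) - (j : ℝ)) •
              (prodDesc (fun i => W i - avgMat n) (k - 1) j * (G (j : ℤ) - G ((j : ℤ) - 1)))) :=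
  consensus_error_window_formula_general n d τ hτ α W hrow hcol hJ G hGm1 X g hX hg hg0
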